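/- arXiv:math/0307258 — 3 statements merged into one kernel-verified Lean document; each statement's English description precedes it below -/
import Mathlib

section
/- Let Λ be a finite poset, A = ℤ[v, v^{-1}], and M a free A-module with basis {u_λ}. Let ι : M → M be an additive involution satisfying ι(p·x) = p̄·ι(x) where p̄ is the ring involution v ↦ v^{-1}, and suppose ι(u_μ) = Σ_λ r_{λ,μ} u_λ with r_{μ,μ} = 1 and r_{λ,μ} = 0 unless λ ≤ μ. Then for each μ ∈ Λ there exists a unique element c_μ ∈ M with ι(c_μ) = c_μ and c_μ ∈ u_μ + Σ_{λ < μ} v^{-1}ℤ[v^{-1}] u_λ. -/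
/-!
At an index `λ` maximal in the support of `x`, triangularity gives `(ι x)_λ = invert (x_λ)`.
Uniqueness: the difference of two canonical elements is `ι`-invariant with all coefficients in
`v⁻¹ℤ[v⁻¹]`, so its coefficient at a maximal index is a bar-invariant element of `v⁻¹ℤ[v⁻¹]`,
hence zero.
Existence: `d = ι u_μ - u_μ` is anti-invariant and supported below `μ`, and we solve
`y - ι y = d` with `y` supported below `μ` and coefficients in `v⁻¹ℤ[v⁻¹]`, peeling off a maximal
index `λ`: the coefficient `d_λ` is anti-invariant, hence `d_λ = q - invert q` with `q` its part of
negative degree, and `d - (z - ι z)` for `z = q u_λ` is anti-invariant and supported on a smaller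
lower set. Then `c_μ = u_μ + y`.
-/

open Finset LaurentPolynomial

namespace LaurentPolynomial

variable {R : Type*} [CommRing R]

theorem eq_zero_of_invert_eq_self {p : R[T;T⁻¹]} (hp : invert p = p)
    (hneg : ∀ n : ℤ, 0 ≤ n → p.coeff n = 0) : p = 0 := by
  ext n
  rcases le_or_gt 0 n with hn | hn
  · exact hneg n hn
  · rw [← hp, invert_apply]
    exact hneg (-n) (by omega)

theorem exists_sub_invert_eq_of_invert_eq_neg [IsAddTorsionFree R] {p : R[T;T⁻¹]}
    (hp : invert p = -p) :
    ∃ q : R[T;T⁻¹], (∀ n : ℤ, 0 ≤ n → q.coeff n = 0) ∧ q - invert q = p := by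
  have hcoeff (n : ℤ) : p.coeff (-n) = -p.coeff n := by
    rw [← invert_apply, hp]; rfl
  refine ⟨AddMonoidAlgebra.ofCoeff (p.coeff.filter (· < 0)), fun n hn => ?_, ?_⟩
  · simp [hn.not_gt]
  · ext n
    simp only [AddMonoidAlgebra.coeff_sub, Finsupp.sub_apply, invert_apply,
      Finsupp.filter_apply]
    rcases lt_trichotomy n 0 with hn | rfl | hn
    · simp [hn, hn.le]
    · simpa using (self_eq_neg.mp (by simpa using hcoeff 0)).symm
    · simp [hn.not_gt, hn, hcoeff]

end LaurentPolynomial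

namespace KazhdanLusztig

variable {R Λ : Type*} [CommRing R] {ι : (Λ →₀ R[T;T⁻¹]) →+ (Λ →₀ R[T;T⁻¹])}
  (hsemi : ∀ (p : R[T;T⁻¹]) (x : Λ →₀ R[T;T⁻¹]), ι (p • x) = invert p • ι x)

include hsemi in
theorem apply_eq_sum (x : Λ →₀ R[T;T⁻¹]) (l : Λ) :
    ι x l = x.sum fun ν p => invert p * ι (Finsupp.single ν 1) l := by
  conv_lhs => rw [← x.sum_single]
  rw [map_finsuppSum, Finsupp.sum_apply]
  refine Finset.sum_congr rfl fun ν _ => ?_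
  dsimp only
  rw [← Finsupp.smul_single_one, hsemi]
  rfl

variable [PartialOrder Λ] (htri : ∀ μ l, ι (Finsupp.single μ 1) l ≠ 0 → l ≤ μ)
  (hdiag : ∀ μ, ι (Finsupp.single μ 1) μ = 1)

include hsemi htri hdiag in
theorem apply_eq_invert_of_forall_lt {x : Λ →₀ R[T;T⁻¹]} {l : Λ}
    (hx : ∀ ν, l < ν → x ν = 0) : ι x l = invert (x l) := by
  rw [apply_eq_sum hsemi, Finsupp.sum, Finset.sum_eq_single l]
  · rw [hdiag, mul_one]
  · intro ν hν hne
    by_cases hle : l ≤ ν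
    · exact absurd (hx ν (lt_of_le_of_ne hle (Ne.symm hne))) (Finsupp.mem_support_iff.mp hν)
    · rw [not_imp_comm.mp (htri ν l) hle, mul_zero]
  · intro hl
    rw [Finsupp.notMem_support_iff.mp hl, map_zero, zero_mul]

include hsemi htri in
theorem support_apply_subset {s : Set Λ} (hs : IsLowerSet s) {x : Λ →₀ R[T;T⁻¹]}
    (hx : ↑x.support ⊆ s) : ↑(ι x).support ⊆ s := by
  refine Finsupp.support_subset_iff.mpr fun l hl => ?_
  rw [apply_eq_sum hsemi]
  refine Finset.sum_eq_zero fun ν hν => ?_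
  dsimp only
  rw [not_imp_comm.mp (htri ν l) (fun hle => hl (hs hle (hx hν))), mul_zero]

include hsemi htri hdiag in
theorem eq_zero_of_apply_eq_self {x : Λ →₀ R[T;T⁻¹]} (hx : ι x = x)
    (hneg : ∀ l (n : ℤ), 0 ≤ n → (x l).coeff n = 0) : x = 0 := by
  by_contra hne
  obtain ⟨l, hl, hmax⟩ := Finset.exists_maximal (Finsupp.support_nonempty_iff.mpr hne)
  have htop : ∀ ν, l < ν → x ν = 0 := fun ν hν =>
    Finsupp.notMem_support_iff.mp fun h => hν.not_ge (hmax h hν.le)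
  have hfix : invert (x l) = x l := by
    rw [← apply_eq_invert_of_forall_lt hsemi htri hdiag htop, hx]
  exact Finsupp.mem_support_iff.mp hl (eq_zero_of_invert_eq_self hfix (hneg l))

include hsemi htri hdiag in
theorem exists_sub_apply_eq_of_apply_eq_neg [IsAddTorsionFree R] (hinv : Function.Involutive ι)
    (D : Finset Λ) (hD : IsLowerSet (D : Set Λ)) {d : Λ →₀ R[T;T⁻¹]}
    (hdD : ↑d.support ⊆ (D : Set Λ)) (hd : ι d = -d) :
    ∃ y : Λ →₀ R[T;T⁻¹], ↑y.support ⊆ (D : Set Λ) ∧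
      (∀ l (n : ℤ), 0 ≤ n → (y l).coeff n = 0) ∧ y - ι y = d := by
  classical
  induction D using Finset.strongInduction generalizing d with
  | H D ih =>
    rcases D.eq_empty_or_nonempty with rfl | hne
    · have : d = 0 := Finsupp.support_eq_empty.mp (by simpa using hdD)
      exact ⟨0, by simp, by simp, by simp [this]⟩
    obtain ⟨l, hlD, hmax⟩ := Finset.exists_maximal hne
    have htop : ∀ ν, l < ν → d ν = 0 := fun ν hν =>
      Finsupp.notMem_support_iff.mp fun h => hν.not_ge (hmax (hdD h) hν.le)
    obtain ⟨q, hq, hqd⟩ := exists_sub_invert_eq_of_invert_eq_neg (p := d l) (by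
      rw [← apply_eq_invert_of_forall_lt hsemi htri hdiag htop, hd, Finsupp.neg_apply])
    set z := Finsupp.single l q
    have hzD : ↑z.support ⊆ (D : Set Λ) :=
      (Finset.coe_subset.mpr Finsupp.support_single_subset).trans (by simpa using hlD)
    have hιz : ι z l = invert q := by
      rw [apply_eq_invert_of_forall_lt hsemi htri hdiag fun ν hν => Finsupp.single_eq_of_ne hν.ne',
        Finsupp.single_eq_same]
    set d' := d - (z - ι z)
    have hd'D : ↑d'.support ⊆ ((D.erase l : Finset Λ) : Set Λ) := by
      refine Finsupp.support_subset_iff.mpr fun a ha => ?_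
      rw [Finset.coe_erase, Set.mem_sdiff, not_and_not_right, Set.mem_singleton_iff] at ha
      by_cases hal : a = l
      · simp [d', hal, hιz, z, hqd]
      · have hout := fun (f : Λ →₀ R[T;T⁻¹]) (hf : ↑f.support ⊆ (D : Set Λ)) =>
          Finsupp.support_subset_iff.mp hf a (mt ha hal)
        simp [d', hout d hdD, hout z hzD, hout _ (support_apply_subset hsemi htri hD hzD)]
    have hd' : ι d' = -d' := by
      simp only [d', map_sub, hinv z, hd]; abel
    obtain ⟨y, hyD, hy, hyd⟩ := ih _ (Finset.erase_ssubset hlD)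
      (by simpa using hD.erase fun b hb hlb => (hmax hb hlb).antisymm hlb) hd'D hd'
    refine ⟨y + z, ?_, fun ν n hn => ?_, ?_⟩
    · refine (Finset.coe_subset.mpr Finsupp.support_add).trans ?_
      rw [Finset.coe_union]
      exact Set.union_subset (hyD.trans (Finset.coe_subset.mpr (D.erase_subset l))) hzD
    · by_cases hνl : ν = l
      · simp [z, hνl, hy _ n hn, hq n hn]
      · simp [z, Finsupp.single_eq_of_ne hνl, hy _ n hn]
    · rw [map_add, add_sub_add_comm, hyd, sub_add_cancel]

variable (ι) in
def IsCanonical (μ : Λ) (c : Λ →₀ R[T;T⁻¹]) : Prop :=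
  ι c = c ∧ c μ = 1 ∧
    ∀ l, l ≠ μ → (c l ≠ 0 → l < μ) ∧ ∀ n : ℤ, 0 ≤ n → (c l).coeff n = 0

include hsemi htri hdiag in
theorem IsCanonical.eq {μ : Λ} {c c' : Λ →₀ R[T;T⁻¹]} (hc : IsCanonical ι μ c)
    (hc' : IsCanonical ι μ c') : c = c' := by
  refine sub_eq_zero.mp (eq_zero_of_apply_eq_self hsemi htri hdiag
    (by rw [map_sub, hc.1, hc'.1]) fun l n hn => ?_)
  rw [Finsupp.sub_apply, AddMonoidAlgebra.coeff_sub, Finsupp.sub_apply]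
  by_cases hl : l = μ
  · rw [hl, hc.2.1, hc'.2.1, sub_self]
  · rw [(hc.2.2 l hl).2 n hn, (hc'.2.2 l hl).2 n hn, sub_self]

include hsemi htri hdiag in
theorem exists_isCanonical [Finite Λ] [IsAddTorsionFree R] (hinv : Function.Involutive ι)
    (μ : Λ) : ∃ c, IsCanonical ι μ c := by
  set u := Finsupp.single μ (1 : R[T;T⁻¹])
  set D := (Set.toFinite (Set.Iio μ)).toFinset
  have hD : IsLowerSet (D : Set Λ) := by simpa [D] using isLowerSet_Iio μ
  have huD : ↑(ι u - u).support ⊆ (D : Set Λ) := by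
    refine Finsupp.support_subset_iff.mpr fun l hl => ?_
    rw [Set.Finite.coe_toFinset, Set.mem_Iio] at hl
    by_cases hlμ : l = μ
    · simp [hlμ, u, hdiag]
    · have hle : ¬ l ≤ μ := fun h => hl (lt_of_le_of_ne h hlμ)
      simp [u, Finsupp.single_eq_of_ne hlμ, not_imp_comm.mp (htri μ l) hle]
  obtain ⟨y, hyD, hy, hyu⟩ := exists_sub_apply_eq_of_apply_eq_neg hsemi htri hdiag hinv D hD huD
    (by rw [map_sub, hinv u, neg_sub])
  have hyl : ∀ l, y l ≠ 0 → l < μ := fun l h => by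
    simpa [D] using hyD (Finsupp.mem_support_iff.mpr h)
  have hιy : ι y = y + u - ι u := by rw [← sub_sub_cancel y (ι y), hyu]; abel
  refine ⟨u + y, by rw [map_add, hιy]; abel, ?_, fun l hl => ?_⟩
  · rw [Finsupp.add_apply, Finsupp.single_eq_same, not_imp_comm.mp (hyl μ) (lt_irrefl μ),
      add_zero]
  · rw [Finsupp.add_apply, Finsupp.single_eq_of_ne hl, zero_add]
    exact ⟨hyl l, hy l⟩

include hsemi htri hdiag in
theorem existsUnique_isCanonical [Finite Λ] [IsAddTorsionFree R]
    (hinv : Function.Involutive ι) (μ : Λ) : ∃! c, IsCanonical ι μ c :=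
  let ⟨c, hc⟩ := exists_isCanonical hsemi htri hdiag hinv μ
  ⟨c, hc, fun _ hc' => hc'.eq hsemi htri hdiag hc⟩

end KazhdanLusztig

theorem exists_unique_canonical_basis_element_general
    (Λ : Type*) [Fintype Λ] [PartialOrder Λ]
    [DecidableRel ((· ≤ ·) : Λ → Λ → Prop)]
    (ι : (Λ →₀ LaurentPolynomial ℤ) →+ (Λ →₀ LaurentPolynomial ℤ))
    (hsemi : ∀ (p : LaurentPolynomial ℤ) (x : Λ →₀ LaurentPolynomial ℤ),
      ι (p • x) = (invert p : LaurentPolynomial ℤ) • ι x)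
    (hinv : ∀ x, ι (ι x) = x)
    (r : Λ → Λ → LaurentPolynomial ℤ)
    (hr : ∀ μ : Λ, ι (Finsupp.single μ 1)
      = ∑ l ∈ univ.filter (fun l => l ≤ μ), Finsupp.single l (r l μ))
    (hdiag : ∀ μ : Λ, r μ μ = 1) :
    ∀ μ : Λ, ∃! c : Λ →₀ LaurentPolynomial ℤ,
      ι c = c ∧ c μ = 1 ∧
      ∀ l : Λ, l ≠ μ →
        (c l ≠ 0 → l < μ) ∧ (∀ n : ℤ, 0 ≤ n → ((c l).coeff : ℤ →₀ ℤ) n = 0) := by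
  have hsingle (μ l : Λ) : ι (Finsupp.single μ 1) l = if l ≤ μ then r l μ else 0 := by
    classical
    simp [hr μ, Finsupp.finsetSum_apply, Finsupp.single_apply]
  have htri (μ l : Λ) (h : ι (Finsupp.single μ 1) l ≠ 0) : l ≤ μ := by
    by_contra hle
    exact h (by rw [hsingle, if_neg hle])
  exact KazhdanLusztig.existsUnique_isCanonical hsemi htri
    (fun μ => by rw [hsingle, if_pos le_rfl, hdiag]) hinv

/-- Kazhdan–Lusztig lemma: over `A = ℤ[v,v⁻¹]` with the bar involution
`v ↦ v⁻¹` (`LaurentPolynomial.invert`), let `M` be the free `A`-module on a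
finite poset `Λ` with standard basis `u_λ`, and let `ι : M → M` be an additive
bar-semilinear involution with `ι(u_μ) = Σ_{λ ≤ μ} r_{λ,μ} u_λ`, `r_{μ,μ} = 1`.
Then for each `μ` there is a unique bar-invariant `c_μ` lying in
`u_μ + Σ_{λ < μ} v⁻¹ℤ[v⁻¹] u_λ` (i.e. `c_μ μ = 1`, the other coefficients are
supported on `λ < μ` and have zero coefficients in degrees `≥ 0`). -/
theorem exists_unique_canonical_basis_element
    (Λ : Type*) [Fintype Λ] [PartialOrder Λ] [DecidableEq Λ]
    [DecidableRel ((· ≤ ·) : Λ → Λ → Prop)]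
    (ι : (Λ →₀ LaurentPolynomial ℤ) →+ (Λ →₀ LaurentPolynomial ℤ))
    (hsemi : ∀ (p : LaurentPolynomial ℤ) (x : Λ →₀ LaurentPolynomial ℤ),
      ι (p • x) = (invert p : LaurentPolynomial ℤ) • ι x)
    (hinv : ∀ x, ι (ι x) = x)
    (r : Λ → Λ → LaurentPolynomial ℤ)
    (hr : ∀ μ : Λ, ι (Finsupp.single μ 1)
      = ∑ l ∈ univ.filter (fun l => l ≤ μ), Finsupp.single l (r l μ))
    (hdiag : ∀ μ : Λ, r μ μ = 1) :
    ∀ μ : Λ, ∃! c : Λ →₀ LaurentPolynomial ℤ,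
      ι c = c ∧ c μ = 1 ∧
      ∀ l : Λ, l ≠ μ →
        (c l ≠ 0 → l < μ) ∧ (∀ n : ℤ, 0 ≤ n → ((c l).coeff : ℤ →₀ ℤ) n = 0) :=
  exists_unique_canonical_basis_element_general Λ ι hsemi hinv r hr hdiag
end

section
/- Let 0 → N → E → M → 0 be a non-split short exact sequence of finite-dimensional modules over a finite-dimensional k-algebra A. Then dim_k End_A(M ⊕ N) > dim_k End_A(E). -/
/-!
Left exactness of `Hom_A(-, X)` and of `Hom_A(E, -)` on `0 → N → E → M → 0` gives
`dim Hom(E, X) ≤ dim Hom(M, X) + dim Hom(N, X)` and `dim End(E) ≤ dim Hom(E, N) + dim Hom(E, M)`.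
For `X = N` the first inequality is strict, since `id_N` is not of the form `r ∘ f` when the
sequence does not split. The sum of the right-hand sides is `dim End(M ⊕ N)`.
-/

open Module

section Exact

variable {K U V W : Type*} [DivisionRing K] [AddCommGroup U] [Module K U]
  [AddCommGroup V] [Module K V] [AddCommGroup W] [Module K W] [FiniteDimensional K V]
  {φ : U →ₗ[K] V} {ψ : V →ₗ[K] W}

theorem finrank_eq_finrank_add_finrank_range_of_exact (hφ : Function.Injective φ)
    (h : Function.Exact φ ψ) : finrank K V = finrank K U + finrank K (LinearMap.range ψ) := by
  rw [← ψ.finrank_range_add_finrank_ker, LinearMap.exact_iff.mp h,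
    LinearMap.finrank_range_of_inj hφ, add_comm]

variable [FiniteDimensional K W]

theorem finrank_le_finrank_add_finrank_of_exact (hφ : Function.Injective φ)
    (h : Function.Exact φ ψ) : finrank K V ≤ finrank K U + finrank K W := by
  rw [finrank_eq_finrank_add_finrank_range_of_exact hφ h]
  exact Nat.add_le_add_left (Submodule.finrank_le _) _

theorem finrank_lt_finrank_add_finrank_of_exact (hφ : Function.Injective φ)
    (h : Function.Exact φ ψ) (hψ : ¬ Function.Surjective ψ) :
    finrank K V < finrank K U + finrank K W := by
  rw [finrank_eq_finrank_add_finrank_range_of_exact hφ h]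
  exact Nat.add_lt_add_left (Submodule.finrank_lt (mt LinearMap.range_eq_top.mp hψ)) _

end Exact

section Hom

variable {R S N M₁ M₂ M₃ : Type*} [Ring R] [Semiring S] [AddCommGroup N] [Module R N]
  [AddCommGroup M₁] [Module R M₁] [AddCommGroup M₂] [Module R M₂] [AddCommGroup M₃] [Module R M₃]
  {f : M₁ →ₗ[R] M₂} {g : M₂ →ₗ[R] M₃}

theorem Function.Exact.lcomp [Module S N] [SMulCommClass R S N] (h : Function.Exact f g)
    (hg : Function.Surjective g) :
    Function.Exact (LinearMap.lcomp S N g) (LinearMap.lcomp S N f) := by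
  intro u
  refine ⟨fun hu ↦ ?_, ?_⟩
  · refine ⟨(LinearMap.range f).liftQ u (LinearMap.range_le_ker_iff.mpr hu) ∘ₗ
      (h.linearEquivOfSurjective hg).symm.toLinearMap, ?_⟩
    ext x
    simp
  · rintro ⟨v, rfl⟩
    rw [LinearMap.lcomp_apply', LinearMap.lcomp_apply', LinearMap.comp_assoc,
      h.linearMap_comp_eq_zero, LinearMap.comp_zero]

theorem Function.Exact.compRight [Module S M₁] [Module S M₂] [Module S M₃]
    [SMulCommClass R S M₁] [SMulCommClass R S M₂] [SMulCommClass R S M₃]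
    [LinearMap.CompatibleSMul M₁ M₂ S R] [LinearMap.CompatibleSMul M₂ M₃ S R]
    (h : Function.Exact f g) (hf : Function.Injective f) :
    Function.Exact (LinearMap.compRight S f : (N →ₗ[R] M₁) →ₗ[S] N →ₗ[R] M₂)
      (LinearMap.compRight S g) := by
  intro u
  refine ⟨fun hu ↦ ?_, ?_⟩
  · have hu_range (x : N) : u x ∈ LinearMap.range f :=
      (h (u x)).mp (LinearMap.congr_fun hu x)
    refine ⟨(LinearEquiv.ofInjective f hf).symm.toLinearMap ∘ₗ
      u.codRestrict (LinearMap.range f) hu_range, ?_⟩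
    ext x
    simp [LinearMap.codRestrict]
  · rintro ⟨v, rfl⟩
    rw [LinearMap.compRight_apply, LinearMap.compRight_apply, ← LinearMap.comp_assoc,
      h.linearMap_comp_eq_zero, LinearMap.zero_comp]

end Hom

section Dimension

variable {k A : Type*} [Field k] [Ring A] [Algebra k A]
  {X Y Z : Type*}
  [AddCommGroup X] [Module A X] [Module k X] [IsScalarTower k A X]
  [AddCommGroup Y] [Module A Y] [Module k Y] [IsScalarTower k A Y]
  [AddCommGroup Z] [Module A Z] [Module k Z] [IsScalarTower k A Z]
  [FiniteDimensional k X] [FiniteDimensional k Y] [FiniteDimensional k Z]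

instance LinearMap.finiteDimensional_of_isScalarTower [SMulCommClass A k Y] :
    FiniteDimensional k (X →ₗ[A] Y) :=
  .of_injective (LinearMap.restrictScalarsₗ k A X Y k) (LinearMap.restrictScalars_injective k)

theorem finrank_linearMap_prod_left [SMulCommClass A k Z] :
    finrank k (X × Y →ₗ[A] Z) = finrank k (X →ₗ[A] Z) + finrank k (Y →ₗ[A] Z) := by
  rw [← (LinearMap.coprodEquiv k).finrank_eq, finrank_prod]

theorem finrank_linearMap_prod_right [SMulCommClass A k Y] [SMulCommClass A k Z] :
    finrank k (X →ₗ[A] Y × Z) = finrank k (X →ₗ[A] Y) + finrank k (X →ₗ[A] Z) := by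
  rw [← (LinearMap.prodEquiv k).finrank_eq, finrank_prod]

end Dimension

theorem end_dim_dsum_gt_of_nonsplit_ses_general
    (k : Type) [Field k] (A : Type) [Ring A] [Algebra k A]
    (M N E : Type)
    [AddCommGroup M] [Module A M] [Module k M] [IsScalarTower k A M]
      [SMulCommClass A k M] [FiniteDimensional k M]
    [AddCommGroup N] [Module A N] [Module k N] [IsScalarTower k A N]
      [SMulCommClass A k N] [FiniteDimensional k N]
    [AddCommGroup E] [Module A E] [Module k E] [IsScalarTower k A E]
      [SMulCommClass A k E] [FiniteDimensional k E]
    (f : N →ₗ[A] E) (g : E →ₗ[A] M)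
    (hf : Function.Injective f) (hg : Function.Surjective g)
    (hfg : LinearMap.range f = LinearMap.ker g)
    (hnonsplit : ¬ ∃ r : E →ₗ[A] N, r ∘ₗ f = LinearMap.id) :
    finrank k (Module.End A (M × N)) > finrank k (Module.End A E) := by
  have hexact : Function.Exact f g := LinearMap.exact_iff.mpr hfg.symm
  have hEnd : finrank k (Module.End A (M × N)) = finrank k (M →ₗ[A] M) + finrank k (N →ₗ[A] M)
      + (finrank k (M →ₗ[A] N) + finrank k (N →ₗ[A] N)) := by
    rw [finrank_linearMap_prod_right, finrank_linearMap_prod_left,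
      finrank_linearMap_prod_left]
  have hE : finrank k (Module.End A E) ≤ finrank k (E →ₗ[A] N) + finrank k (E →ₗ[A] M) :=
    finrank_le_finrank_add_finrank_of_exact hf.injective_linearMapComp_left
      (hexact.compRight hf)
  have hEM : finrank k (E →ₗ[A] M) ≤ finrank k (M →ₗ[A] M) + finrank k (N →ₗ[A] M) :=
    finrank_le_finrank_add_finrank_of_exact (LinearMap.lcomp_injective_of_surjective g hg)
      (hexact.lcomp hg)
  have hEN : finrank k (E →ₗ[A] N) < finrank k (M →ₗ[A] N) + finrank k (N →ₗ[A] N) := by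
    refine finrank_lt_finrank_add_finrank_of_exact
      (LinearMap.lcomp_injective_of_surjective g hg) (hexact.lcomp hg) fun hsurj ↦ ?_
    obtain ⟨r, hr⟩ := hsurj LinearMap.id
    exact hnonsplit ⟨r, hr⟩
  omega

/-- If `0 → N → E → M → 0` is a non-split short exact sequence (the inclusion
`N → E` admits no `A`-linear retraction) of finite-dimensional modules over a
finite-dimensional `k`-algebra `A`, then
`dim_k End_A(M ⊕ N) > dim_k End_A(E)`. -/
theorem end_dim_dsum_gt_of_nonsplit_ses
    (k : Type) [Field k] (A : Type) [Ring A] [Algebra k A] [FiniteDimensional k A]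
    (M N E : Type)
    [AddCommGroup M] [Module A M] [Module k M] [IsScalarTower k A M]
      [SMulCommClass A k M] [FiniteDimensional k M]
    [AddCommGroup N] [Module A N] [Module k N] [IsScalarTower k A N]
      [SMulCommClass A k N] [FiniteDimensional k N]
    [AddCommGroup E] [Module A E] [Module k E] [IsScalarTower k A E]
      [SMulCommClass A k E] [FiniteDimensional k E]
    (f : N →ₗ[A] E) (g : E →ₗ[A] M)
    (hf : Function.Injective f) (hg : Function.Surjective g)
    (hfg : LinearMap.range f = LinearMap.ker g)
    (hnonsplit : ¬ ∃ r : E →ₗ[A] N, r ∘ₗ f = LinearMap.id) :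
    finrank k (Module.End A (M × N)) > finrank k (Module.End A E) :=
  end_dim_dsum_gt_of_nonsplit_ses_general k A M N E f g hf hg hfg hnonsplit
end

section
/- Let k be a finite field, A a finite-dimensional k-algebra, M a finite A-module, and N_1, ..., N_t finite A-modules. If the number F^M_{N_1 ⋯ N_t} of filtrations M = M_0 ⊃ M_1 ⊃ ⋯ ⊃ M_t = 0 with M_{r−1}/M_r ≅ N_r is nonzero, and each N_r = e_r · S_{j_r} is a direct sum of e_r copies of a simple module S_{j_r} with pairwise distinct simples S_{j_1},...,S_{j_t} satisfying Ext^1_A(S_{j_r}, S_{j_s}) ≠ 0 ⟹ r < s and Hom_A(S_{j_r}, S_{j_s}) = 0 for r ≠ s, then F^M_{N_1 ⋯ N_t} = 1. -/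
section Aux

variable {A : Type} [Ring A]

/-- Monotonicity of a chain. -/
lemma chain_anti {M : Type} [AddCommGroup M] [Module A M] {n : ℕ}
    (c : Fin (n+1) → Submodule A M)
    (hle : ∀ r : Fin n, c r.succ ≤ c r.castSucc) :
    ∀ a b : Fin (n+1), a ≤ b → c b ≤ c a := by
  intro a b
  induction b using Fin.induction with
  | zero => intro h; rw [Fin.le_zero_iff.mp h]
  | succ i ih =>
    intro h
    rcases eq_or_lt_of_le h with h' | h'
    · rw [h']
    · exact (hle i).trans (ih (Fin.le_castSucc_iff.mpr h'))

/-- Congruence for quotients of submodules. -/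
noncomputable def quotCongr {M : Type} [AddCommGroup M] [Module A M]
    {X X' Y Y' : Submodule A M} (hX : X = X') (hY : Y = Y') :
    (↥X ⧸ Submodule.comap X.subtype Y) ≃ₗ[A] (↥X' ⧸ Submodule.comap X'.subtype Y') := by
  subst hX; subst hY; exact LinearEquiv.refl A _

/-- A linear map vanishing on the bottom of a chain, whose layers admit no
nonzero maps to `T`, vanishes on the top of the chain. -/
lemma vanish_of_chain {M T : Type} [AddCommGroup M] [Module A M]
    [AddCommGroup T] [Module A T]
    {ι : Type} (S : ι → Type) [∀ i, AddCommGroup (S i)] [∀ i, Module A (S i)]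
    (n : ℕ) (j : Fin n → ι) (e : Fin n → ℕ)
    (c : Fin (n+1) → Submodule A M)
    (hiso : ∀ r : Fin n, Nonempty ((↥(c r.castSucc) ⧸
        Submodule.comap (c r.castSucc).subtype (c r.succ)) ≃ₗ[A] (Fin (e r) → S (j r))))
    (hT : ∀ r : Fin n, ∀ f : S (j r) →ₗ[A] T, f = 0)
    (φ : M →ₗ[A] T) (h0 : ∀ x ∈ c (Fin.last n), φ x = 0) :
    ∀ x ∈ c 0, φ x = 0 := by
  have key : ∀ r : Fin (n+1), ∀ x ∈ c r, φ x = 0 := by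
    intro r
    induction r using Fin.reverseInduction with
    | last => exact h0
    | cast r ih =>
      intro x hx
      set P := c r.castSucc with hP
      set Q := Submodule.comap P.subtype (c r.succ) with hQdef
      have hQ : Q ≤ LinearMap.ker (φ.comp P.subtype) := by
        intro z hz
        simp only [LinearMap.mem_ker, LinearMap.comp_apply, Submodule.subtype_apply]
        exact ih _ hz
      obtain ⟨g⟩ := hiso r
      set ψ : (↥P ⧸ Q) →ₗ[A] T := Q.liftQ (φ.comp P.subtype) hQ with hψ
      have hχ : ψ.comp (g.symm : (Fin (e r) → S (j r)) →ₗ[A] ↥P ⧸ Q) = 0 := by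
        apply LinearMap.pi_ext'
        intro i
        rw [hT r ((ψ.comp (g.symm : (Fin (e r) → S (j r)) →ₗ[A] ↥P ⧸ Q)).comp
          (LinearMap.single A (fun _ => S (j r)) i))]
        ext z
        simp
      have hψ0 : ∀ y : ↥P ⧸ Q, ψ y = 0 := by
        intro y
        have h1 : ψ (g.symm (g y)) = 0 := by
          have := congrArg (fun (h : (Fin (e r) → S (j r)) →ₗ[A] T) => h (g y)) hχ
          simpa using this
        simpa using h1
      have hx' : φ x = ψ (Q.mkQ ⟨x, hx⟩) := rfl
      rw [hx', hψ0]
  exact key 0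

/-- Comparing a quotient of comapped submodules with the original quotient. -/
noncomputable def comapQuotEquiv {M : Type} [AddCommGroup M] [Module A M]
    (W X Y : Submodule A M) (hXW : X ≤ W) :
    (↥(Submodule.comap W.subtype X) ⧸
      Submodule.comap (Submodule.comap W.subtype X).subtype (Submodule.comap W.subtype Y))
      ≃ₗ[A] (↥X ⧸ Submodule.comap X.subtype Y) := by
  refine Submodule.Quotient.equiv _ _ (Submodule.comapSubtypeEquivOfLe hXW) ?_
  ext u
  simp only [Submodule.mem_map, Submodule.mem_comap, Submodule.subtype_apply]
  constructor
  · rintro ⟨z, hz, rfl⟩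
    simpa [Submodule.comapSubtypeEquivOfLe] using hz
  · intro hu
    refine ⟨⟨⟨u.1, hXW u.2⟩, u.2⟩, hu, ?_⟩
    apply Subtype.ext
    simp [Submodule.comapSubtypeEquivOfLe]

/-- The quotient by `p` viewed from the top submodule. -/
noncomputable def topQuotEquiv {M : Type} [AddCommGroup M] [Module A M] (p : Submodule A M) :
    (↥(⊤ : Submodule A M) ⧸ Submodule.comap (⊤ : Submodule A M).subtype p)
      ≃ₗ[A] (M ⧸ p) := by
  refine Submodule.Quotient.equiv _ _ (Submodule.topEquiv) ?_
  ext x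
  simp only [Submodule.mem_map, Submodule.mem_comap, Submodule.subtype_apply,
    Submodule.topEquiv_apply]
  constructor
  · rintro ⟨z, hz, rfl⟩; exact hz
  · intro hx; exact ⟨⟨x, trivial⟩, hx, rfl⟩

lemma comap_subtype_inj {M : Type} [AddCommGroup M] [Module A M]
    {W X Y : Submodule A M} (hX : X ≤ W) (hY : Y ≤ W)
    (h : Submodule.comap W.subtype X = Submodule.comap W.subtype Y) : X = Y := by
  have := congrArg (Submodule.map W.subtype) h
  rwa [Submodule.map_comap_subtype, Submodule.map_comap_subtype,
    inf_eq_right.mpr hX, inf_eq_right.mpr hY] at this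

/-- The chain condition. -/
def ChainCond {ι : Type} (S : ι → Type) [∀ i, AddCommGroup (S i)] [∀ i, Module A (S i)]
    (t : ℕ) (j : Fin t → ι) (e : Fin t → ℕ)
    {M : Type} [AddCommGroup M] [Module A M] (c : Fin (t+1) → Submodule A M) : Prop :=
  c 0 = ⊤ ∧ c (Fin.last t) = ⊥ ∧ ∀ r : Fin t,
    c r.succ ≤ c r.castSucc ∧
    Nonempty ((↥(c r.castSucc) ⧸
        Submodule.comap (c r.castSucc).subtype (c r.succ)) ≃ₗ[A]
      (Fin (e r) → S (j r)))

/-- Key step: the first submodule of one chain is contained in that of another. -/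
lemma first_le {ι : Type} (S : ι → Type) [∀ i, AddCommGroup (S i)] [∀ i, Module A (S i)]
    (t : ℕ) (j : Fin (t+1) → ι) (e : Fin (t+1) → ℕ)
    (hhom : ∀ r s : Fin (t+1), r ≠ s → ∀ f : S (j r) →ₗ[A] S (j s), f = 0)
    {M : Type} [AddCommGroup M] [Module A M]
    (c c' : Fin (t+2) → Submodule A M)
    (hc : ChainCond S (t+1) j e c) (hc' : ChainCond S (t+1) j e c') :
    c' ((0 : Fin (t+1)).succ) ≤ c ((0 : Fin (t+1)).succ) := by
  obtain ⟨hc0, hcl, hcr⟩ := hc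
  obtain ⟨hc'0, hc'l, hc'r⟩ := hc'
  set p : Submodule A M := c ((0 : Fin (t+1)).succ) with hp
  -- the top quotient of c is a sum of copies of S (j 0)
  obtain ⟨g0⟩ := (hcr 0).2
  have hcc : c ((0 : Fin (t+1)).castSucc) = (⊤ : Submodule A M) := by
    rw [Fin.castSucc_zero]; exact hc0
  have gq : (M ⧸ p) ≃ₗ[A] (Fin (e 0) → S (j 0)) :=
    (topQuotEquiv p).symm.trans ((quotCongr hcc rfl).symm.trans g0)
  -- no nonzero maps from the deeper simples to M ⧸ p
  have hT : ∀ s : Fin t, ∀ f : S (j s.succ) →ₗ[A] (M ⧸ p), f = 0 := by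
    intro s f
    have hcomp : ∀ i : Fin (e 0),
        (LinearMap.proj i).comp ((gq : (M ⧸ p) →ₗ[A] (Fin (e 0) → S (j 0))).comp f) = 0 :=
      fun i => hhom s.succ 0 (Fin.succ_ne_zero s) _
    have hg : (gq : (M ⧸ p) →ₗ[A] (Fin (e 0) → S (j 0))).comp f = 0 := by
      ext x i
      have := congrArg (fun (h : S (j s.succ) →ₗ[A] S (j 0)) => h x) (hcomp i)
      simpa using this
    ext x
    have h1 : gq (f x) = 0 := by
      have := congrArg (fun (h : S (j s.succ) →ₗ[A] (Fin (e 0) → S (j 0))) => h x) hg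
      simpa using this
    simpa using gq.map_eq_zero_iff.mp h1
  -- the shifted chain of c'
  set d : Fin (t+1) → Submodule A M := fun s => c' s.succ with hd
  have hiso_d : ∀ s : Fin t, Nonempty ((↥(d s.castSucc) ⧸
      Submodule.comap (d s.castSucc).subtype (d s.succ)) ≃ₗ[A]
        (Fin (e s.succ) → S (j s.succ))) := by
    intro s
    have h1 : d s.castSucc = c' (s.succ).castSucc := by
      show c' (s.castSucc).succ = c' (s.succ).castSucc
      rw [Fin.succ_castSucc]
    have h2 : d s.succ = c' (s.succ).succ := rfl
    obtain ⟨g⟩ := (hc'r s.succ).2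
    exact ⟨(quotCongr h1 h2).trans g⟩
  have h0 : ∀ x ∈ d (Fin.last t), ((p.mkQ : M →ₗ[A] M ⧸ p)) x = 0 := by
    intro x hx
    have hb : d (Fin.last t) = ⊥ := by
      show c' (Fin.last t).succ = ⊥
      rw [Fin.succ_last]; exact hc'l
    rw [hb] at hx
    simp [(Submodule.mem_bot A).mp hx]
  have := vanish_of_chain S t (fun s => j s.succ) (fun s => e s.succ) d hiso_d hT p.mkQ h0
  intro x hx
  have hx0 : p.mkQ x = 0 := this x hx
  rwa [← Submodule.ker_mkQ p, LinearMap.mem_ker]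

/-- Uniqueness of chains. -/
lemma chain_unique {ι : Type} (S : ι → Type) [∀ i, AddCommGroup (S i)] [∀ i, Module A (S i)] :
    ∀ (t : ℕ) (j : Fin t → ι) (e : Fin t → ℕ),
      (∀ r s : Fin t, r ≠ s → ∀ f : S (j r) →ₗ[A] S (j s), f = 0) →
      ∀ (M : Type) [AddCommGroup M] [Module A M]
        (c c' : Fin (t+1) → Submodule A M),
        ChainCond S t j e c → ChainCond S t j e c' → c = c' := by
  intro t
  induction t with
  | zero =>
    intro j e _ M _ _ c c' hc hc'
    funext r
    rw [Fin.fin_one_eq_zero r, hc.1, hc'.1]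
  | succ t ih =>
    intro j e hhom M _ _ c c' hc hc'
    have heq1 : c ((0 : Fin (t+1)).succ) = c' ((0 : Fin (t+1)).succ) :=
      le_antisymm (first_le S t j e hhom c' c hc' hc) (first_le S t j e hhom c c' hc hc')
    set W : Submodule A M := c ((0 : Fin (t+1)).succ) with hW
    have hanti := chain_anti c (fun r => (hc.2.2 r).1)
    have hanti' := chain_anti c' (fun r => (hc'.2.2 r).1)
    have honele : ∀ s : Fin t, (0 : Fin (t+1)).succ ≤ (s.succ).castSucc := by
      intro s
      rw [← Fin.succ_castSucc]
      exact Fin.succ_le_succ_iff.mpr (Fin.zero_le _)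
    have hleW : ∀ s : Fin t, c (s.succ).castSucc ≤ W := fun s => hanti _ _ (honele s)
    have hleW' : ∀ s : Fin t, c' (s.succ).castSucc ≤ W :=
      fun s => (hanti' _ _ (honele s)).trans (le_of_eq heq1.symm)
    have hleW2 : ∀ x : Fin (t+2), (0 : Fin (t+1)).succ ≤ x → c x ≤ W := fun x h => hanti _ _ h
    have hleW2' : ∀ x : Fin (t+2), (0 : Fin (t+1)).succ ≤ x → c' x ≤ W := by
      intro x h; exact (hanti' _ _ h).trans (le_of_eq heq1.symm)
    -- restricted chains
    set d : Fin (t+1) → Submodule A ↥W := fun s => Submodule.comap W.subtype (c s.succ) with hd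
    set d' : Fin (t+1) → Submodule A ↥W := fun s => Submodule.comap W.subtype (c' s.succ)
      with hd'
    have cond_d : ChainCond S t (fun s => j s.succ) (fun s => e s.succ) d := by
      refine ⟨?_, ?_, ?_⟩
      · show Submodule.comap W.subtype (c (0 : Fin (t+1)).succ) = ⊤
        rw [← hW]
        exact Submodule.comap_subtype_self W
      · show Submodule.comap W.subtype (c (Fin.last t).succ) = ⊥
        rw [Fin.succ_last, hc.2.1, Submodule.comap_bot, Submodule.ker_subtype]
      · intro s
        refine ⟨Submodule.comap_mono (hc.2.2 s.succ).1, ?_⟩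
        have h1 : d s.castSucc = Submodule.comap W.subtype (c (s.succ).castSucc) := by
          show Submodule.comap W.subtype (c (s.castSucc).succ) = _
          rw [Fin.succ_castSucc]
        have h2 : d s.succ = Submodule.comap W.subtype (c (s.succ).succ) := rfl
        obtain ⟨g⟩ := (hc.2.2 s.succ).2
        exact ⟨(quotCongr h1 h2).trans
          ((comapQuotEquiv W (c (s.succ).castSucc) (c (s.succ).succ) (hleW s)).trans g)⟩
    have cond_d' : ChainCond S t (fun s => j s.succ) (fun s => e s.succ) d' := by
      refine ⟨?_, ?_, ?_⟩
      · show Submodule.comap W.subtype (c' (0 : Fin (t+1)).succ) = ⊤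
        rw [← heq1]
        exact Submodule.comap_subtype_self W
      · show Submodule.comap W.subtype (c' (Fin.last t).succ) = ⊥
        rw [Fin.succ_last, hc'.2.1, Submodule.comap_bot, Submodule.ker_subtype]
      · intro s
        refine ⟨Submodule.comap_mono (hc'.2.2 s.succ).1, ?_⟩
        have h1 : d' s.castSucc = Submodule.comap W.subtype (c' (s.succ).castSucc) := by
          show Submodule.comap W.subtype (c' (s.castSucc).succ) = _
          rw [Fin.succ_castSucc]
        have h2 : d' s.succ = Submodule.comap W.subtype (c' (s.succ).succ) := rfl
        obtain ⟨g⟩ := (hc'.2.2 s.succ).2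
        exact ⟨(quotCongr h1 h2).trans
          ((comapQuotEquiv W (c' (s.succ).castSucc) (c' (s.succ).succ) (hleW' s)).trans g)⟩
    have hhom' : ∀ r s : Fin t, r ≠ s →
        ∀ f : S (j r.succ) →ₗ[A] S (j s.succ), f = 0 := by
      intro r s hrs
      exact hhom r.succ s.succ (fun h => hrs (Fin.succ_injective t h))
    have hdd : d = d' := ih (fun s => j s.succ) (fun s => e s.succ) hhom' ↥W d d' cond_d cond_d'
    funext r
    refine Fin.cases ?_ ?_ r
    · rw [hc.1, hc'.1]
    · intro x
      have hx : (0 : Fin (t+1)).succ ≤ x.succ := Fin.succ_le_succ_iff.mpr (Fin.zero_le _)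
      have hcf := congrFun hdd x
      exact comap_subtype_inj (hleW2 _ hx) (hleW2' _ hx) hcf

end Aux

/-- If the number of filtrations `M = M₀ ⊃ M₁ ⊃ ⋯ ⊃ M_t = 0` with
`M_{r-1}/M_r ≅ e_r · S_{j_r}` is nonzero, where the `S_{j_r}` are pairwise
distinct (non-isomorphic) simple modules with `Hom(S_{j_r}, S_{j_s}) = 0` for
`r ≠ s` and `Ext¹(S_{j_r}, S_{j_s}) ≠ 0 ⟹ r < s` (i.e. every extension of
`S_{j_r}` by `S_{j_s}` with `¬ r < s` splits), then that number is `1`. -/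
theorem filtration_number_eq_one
    (k : Type) [Field k] [Fintype k]
    (A : Type) [Ring A] [Algebra k A] [FiniteDimensional k A]
    (M : Type) [AddCommGroup M] [Module A M] [Module k M] [IsScalarTower k A M]
    [FiniteDimensional k M]
    {ι : Type} (S : ι → Type)
    [∀ i, AddCommGroup (S i)] [∀ i, Module A (S i)]
    [∀ i, IsSimpleModule A (S i)]
    (t : ℕ) (j : Fin t → ι) (e : Fin t → ℕ) (he : ∀ r, 1 ≤ e r)
    (hdistinct : ∀ r s : Fin t, r ≠ s → ¬ Nonempty (S (j r) ≃ₗ[A] S (j s)))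
    (hhom : ∀ r s : Fin t, r ≠ s → ∀ f : S (j r) →ₗ[A] S (j s), f = 0)
    (hext : ∀ r s : Fin t, ¬ r < s →
      ∀ (E : Type) [AddCommGroup E] [Module A E]
        (f : S (j s) →ₗ[A] E) (g : E →ₗ[A] S (j r)),
        Function.Injective f → Function.Surjective g →
        LinearMap.range f = LinearMap.ker g →
        ∃ ret : E →ₗ[A] S (j s), ret ∘ₗ f = LinearMap.id)
    (hnonempty : Nonempty {c : Fin (t + 1) → Submodule A M //
        c 0 = ⊤ ∧ c (Fin.last t) = ⊥ ∧ ∀ r : Fin t,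
          c r.succ ≤ c r.castSucc ∧
          Nonempty ((↥(c r.castSucc) ⧸
              Submodule.comap (c r.castSucc).subtype (c r.succ)) ≃ₗ[A]
            (Fin (e r) → S (j r)))}) :
    Nat.card {c : Fin (t + 1) → Submodule A M //
        c 0 = ⊤ ∧ c (Fin.last t) = ⊥ ∧ ∀ r : Fin t,
          c r.succ ≤ c r.castSucc ∧
          Nonempty ((↥(c r.castSucc) ⧸
              Submodule.comap (c r.castSucc).subtype (c r.succ)) ≃ₗ[A]
            (Fin (e r) → S (j r)))} = 1 := by
  rw [Nat.card_eq_one_iff_unique]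
  refine ⟨⟨?_⟩, hnonempty⟩
  rintro ⟨c, hc⟩ ⟨c', hc'⟩
  exact Subtype.ext (chain_unique S t j e hhom M c c' hc hc')
end
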